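/- Let N(a) denote the least positive integer n such that ∑ₖ₌₁ⁿ 1/(2k−1) > a. Then N(a+1)/N(a) → e² as a → ∞ (a ranging over positive reals). -/

import Mathlib

/-!
The odd harmonic sum `S(n) = ∑_{k ≤ n} 1/(2k-1)` equals `H(2n) - H(n)/2`, so by the
Euler–Mascheroni asymptotics of the harmonic numbers `2 S(n) - log n` converges. Since `N(a)` obeys
`S(N(a) - 1) ≤ a < S(N(a))`, it follows that `log N(a) - 2a` converges, and then
`N(a+1)/N(a) = exp (2 + (log N(a+1) - 2(a+1)) - (log N(a) - 2a)) → e²`.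
-/

open Real Filter Finset Topology

noncomputable def oddHarmonic (n : ℕ) : ℝ := ∑ k ∈ Icc 1 n, (1 : ℝ) / (2 * k - 1)

lemma oddHarmonic_zero : oddHarmonic 0 = 0 := by
  simp [oddHarmonic]

lemma oddHarmonic_succ (n : ℕ) : oddHarmonic (n + 1) = oddHarmonic n + 1 / (2 * n + 1) := by
  rw [oddHarmonic, oddHarmonic, sum_Icc_succ_top (Nat.le_add_left 1 n)]
  push_cast
  ring

lemma monotone_oddHarmonic : Monotone oddHarmonic :=
  monotone_nat_of_le_succ fun n => by
    rw [oddHarmonic_succ]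
    exact le_add_of_nonneg_right (by positivity)

lemma oddHarmonic_eq_harmonic (n : ℕ) :
    oddHarmonic n = harmonic (2 * n) - harmonic n / 2 := by
  induction n with
  | zero => simp [oddHarmonic_zero]
  | succ n ih =>
    rw [oddHarmonic_succ, ih, show 2 * (n + 1) = 2 * n + 1 + 1 by ring, harmonic_succ,
      harmonic_succ, harmonic_succ]
    push_cast
    field_simp
    ring

lemma tendsto_two_mul_oddHarmonic_sub_log :
    Tendsto (fun n => 2 * oddHarmonic n - log n) atTop
      (𝓝 (eulerMascheroniConstant + 2 * log 2)) := by
  have hdouble := tendsto_harmonic_sub_log.comp (tendsto_id.const_mul_atTop' two_pos)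
  have hlim := ((hdouble.const_mul 2).sub tendsto_harmonic_sub_log).add_const (2 * log 2)
  rw [show 2 * eulerMascheroniConstant - eulerMascheroniConstant + 2 * log 2
    = eulerMascheroniConstant + 2 * log 2 by ring] at hlim
  refine hlim.congr' ?_
  filter_upwards [eventually_ne_atTop 0] with n hn
  simp only [Function.comp_apply, id, oddHarmonic_eq_harmonic]
  push_cast
  rw [log_mul two_ne_zero (by exact_mod_cast hn)]
  ring

lemma apply_pred_le_of_isLeast {S : ℕ → ℝ} {a : ℝ} {m : ℕ} (h0 : S 0 ≤ a)
    (hm : IsLeast {n : ℕ | 0 < n ∧ a < S n} m) : S (m - 1) ≤ a := by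
  by_contra! hlt
  rcases Nat.lt_or_ge 1 m with hm1 | hm1
  · have := hm.2 ⟨by omega, hlt⟩
    omega
  · rw [Nat.sub_eq_zero_of_le hm1] at hlt
    exact hlt.not_ge h0

lemma Monotone.tendsto_atTop_of_lt_comp {S : ℕ → ℝ} (hS : Monotone S) {N : ℝ → ℕ}
    (hN : ∀ᶠ a in atTop, a < S (N a)) : Tendsto N atTop atTop :=
  tendsto_atTop.2 fun b => by
    filter_upwards [hN, eventually_ge_atTop (S b)] with a hlt hge
    by_contra! hNb
    exact (hlt.trans_le (hS hNb.le)).not_ge hge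

lemma tendsto_log_sub_mul_of_le_of_lt {S : ℕ → ℝ} (hS : Monotone S) {κ C : ℝ} (hκ : 0 ≤ κ)
    (hSlog : Tendsto (fun n => κ * S n - log n) atTop (𝓝 C)) {N : ℝ → ℕ}
    (hle : ∀ᶠ a in atTop, S (N a - 1) ≤ a) (hlt : ∀ᶠ a in atTop, a < S (N a)) :
    Tendsto (fun a => log (N a) - κ * a) atTop (𝓝 (-C)) := by
  have hNtop := hS.tendsto_atTop_of_lt_comp hlt
  have hpred : Tendsto (fun a => N a - 1) atTop atTop := (tendsto_sub_atTop_nat 1).comp hNtop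
  have hlower : Tendsto (fun a => -(κ * S (N a) - log (N a))) atTop (𝓝 (-C)) :=
    (hSlog.comp hNtop).neg
  have hupper : Tendsto (fun a => (log ((N a - 1 : ℕ) + 1) - log (N a - 1 : ℕ))
      - (κ * S (N a - 1) - log (N a - 1 : ℕ))) atTop (𝓝 (0 - C)) :=
    (tendsto_log_nat_add_one_sub_log.comp hpred).sub (hSlog.comp hpred)
  rw [zero_sub] at hupper
  refine tendsto_of_tendsto_of_tendsto_of_le_of_le' hlower hupper ?_ ?_
  · filter_upwards [hlt] with a ha
    linarith [mul_le_mul_of_nonneg_left ha.le hκ]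
  · filter_upwards [hle, hNtop.eventually_ge_atTop 1] with a ha hN1
    rw [Nat.cast_sub hN1, Nat.cast_one, sub_add_cancel]
    linarith [mul_le_mul_of_nonneg_left ha hκ]

lemma tendsto_div_of_tendsto_log_sub_mul {M : ℝ → ℝ} {κ ℓ : ℝ} (hpos : ∀ᶠ a in atTop, 0 < M a)
    (h : Tendsto (fun a => log (M a) - κ * a) atTop (𝓝 ℓ)) :
    Tendsto (fun a => M (a + 1) / M a) atTop (𝓝 (exp κ)) := by
  have hshift : Tendsto (fun a : ℝ => a + 1) atTop atTop :=
    tendsto_atTop_add_const_right atTop 1 tendsto_id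
  have hlim := ((h.comp hshift).sub h).add_const κ
  rw [sub_self, zero_add] at hlim
  refine (continuous_exp.tendsto κ |>.comp hlim).congr' ?_
  filter_upwards [hpos, hshift.eventually hpos] with a ha ha1
  simp only [Function.comp_apply]
  rw [show log (M (a + 1)) - κ * (a + 1) - (log (M a) - κ * a) + κ
    = log (M (a + 1)) - log (M a) by ring, ← log_div ha1.ne' ha.ne', exp_log (div_pos ha1 ha)]

theorem least_n_ratio_tendsto_exp_two
    (N : ℝ → ℕ)
    (hN : ∀ a : ℝ, 0 < a →
      IsLeast {n : ℕ | 0 < n ∧ a < ∑ k ∈ Finset.Icc 1 n, (1 : ℝ) / (2 * k - 1)} (N a)) :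
    Tendsto (fun a : ℝ => (N (a + 1) : ℝ) / (N a : ℝ)) atTop (nhds (Real.exp 2)) := by
  have hpos : ∀ᶠ a : ℝ in atTop, 0 < a := eventually_gt_atTop 0
  have hlog := tendsto_log_sub_mul_of_le_of_lt monotone_oddHarmonic zero_le_two
    tendsto_two_mul_oddHarmonic_sub_log
    (hpos.mono fun a ha => apply_pred_le_of_isLeast (oddHarmonic_zero.trans_le ha.le) (hN a ha))
    (hpos.mono fun a ha => (hN a ha).1.2)
  refine tendsto_div_of_tendsto_log_sub_mul (hpos.mono fun a ha => ?_) hlog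
  exact_mod_cast (hN a ha).1.1
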